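/- arXiv:2112.02856 — 3 statements merged into one kernel-verified Lean document; each statement's English description precedes it below -/
import Mathlib

section
/- Let f: ℝⁿ → ℝ be concave with ℓ-Lipschitz-continuous gradient, let A be a symmetric positive definite matrix with largest eigenvalue σ_max(A), and define f̂(x) = E_{w ~ Unif(Bⁿ)}[f(x + A w)]. Then for all x, 0 ≤ f(x) − f̂(x) ≤ (ℓ/2)·σ_max(A)². -/
open MeasureTheory Metric

/-- The uniform probability measure on the closed unit ball of `ℝⁿ`. -/
noncomputable def unifBall (n : ℕ) : Measure (EuclideanSpace ℝ (Fin n)) :=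
  (volume (closedBall (0 : EuclideanSpace ℝ (Fin n)) 1))⁻¹ • volume.restrict (closedBall 0 1)

lemma descent_lemma {F : Type*} [NormedAddCommGroup F] [InnerProductSpace ℝ F] [CompleteSpace F]
    {f : F → ℝ} {ℓ : ℝ} (hℓ : 0 ≤ ℓ)
    (hf_diff : Differentiable ℝ f) (hf_conc : ConcaveOn ℝ Set.univ f)
    (hf_lip : ∀ x y, ‖gradient f x - gradient f y‖ ≤ ℓ * ‖x - y‖)
    (x u : F) :
    f x + inner ℝ (gradient f x) u - ℓ / 2 * ‖u‖ ^ 2 ≤ f (x + u)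
    ∧ f (x + u) ≤ f x + inner ℝ (gradient f x) u := by
  set g := gradient f x with hg
  set φ : ℝ → ℝ := fun t => f (x + t • u) with hφdef
  have hc : ∀ t : ℝ, HasDerivAt (fun s : ℝ => x + s • u) u t := by
    intro t
    simpa using ((hasDerivAt_id t).smul_const u).const_add x
  have hφ : ∀ t : ℝ, HasDerivAt φ (inner ℝ (gradient f (x + t • u)) u : ℝ) t := by
    intro t
    have h1 : HasFDerivAt f
        (InnerProductSpace.toDual ℝ F (gradient f (x + t • u))) (x + t • u) :=
      (hf_diff _).hasGradientAt
    have h2 := h1.comp_hasDerivAt t (hc t)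
    rw [InnerProductSpace.toDual_apply_apply] at h2
    exact h2
  have hφ0 : HasDerivAt φ (inner ℝ g u : ℝ) 0 := by simpa only [zero_smul, add_zero] using hφ 0
  have hφconc : ConcaveOn ℝ Set.univ φ := by
    have h := hf_conc.comp_affineMap (AffineMap.lineMap x (x + u))
    have heq : ∀ t : ℝ, (f ∘ (AffineMap.lineMap x (x + u))) t = φ t := by
      intro t
      simp [AffineMap.lineMap_apply, hφdef, add_comm]
    have hset : (AffineMap.lineMap x (x+u) : ℝ →ᵃ[ℝ] F) ⁻¹' Set.univ = Set.univ := by simp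
    rw [hset] at h
    exact h.congr (fun t _ => (heq t))
  -- upper bound via concavity
  have hub : φ 1 ≤ φ 0 + inner ℝ g u := by
    have h1 := ConvexOn.le_slope_of_hasDerivAt hφconc.neg (Set.mem_univ (0:ℝ))
      (Set.mem_univ (1:ℝ)) zero_lt_one hφ0.neg
    rw [slope_def_field] at h1
    simp at h1
    linarith
  -- lower bound via FTC
  have contgrad : Continuous (gradient f) := by
    have : LipschitzWith ⟨ℓ, hℓ⟩ (gradient f) := by
      apply LipschitzWith.of_dist_le_mul
      intro a b
      rw [dist_eq_norm, dist_eq_norm]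
      exact hf_lip a b
    exact this.continuous
  have cont : Continuous fun t : ℝ => (inner ℝ (gradient f (x + t • u)) u : ℝ) := by
    exact (contgrad.comp (continuous_const.add (continuous_id.smul continuous_const))).inner
      continuous_const
  have ftc : ∫ t in (0:ℝ)..1, (inner ℝ (gradient f (x + t • u)) u : ℝ) = φ 1 - φ 0 :=
    intervalIntegral.integral_eq_sub_of_hasDerivAt (fun t _ => hφ t)
      (cont.intervalIntegrable 0 1)
  have key : ∀ t ∈ Set.Icc (0:ℝ) 1,
      (inner ℝ g u : ℝ) - ℓ * ‖u‖ ^ 2 * t ≤ (inner ℝ (gradient f (x + t • u)) u : ℝ) := by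
    intro t ht
    have h2 : ‖gradient f (x + t • u) - g‖ ≤ ℓ * (t * ‖u‖) := by
      have h := hf_lip (x + t • u) x
      rw [add_sub_cancel_left, norm_smul, Real.norm_eq_abs, abs_of_nonneg ht.1] at h
      exact h
    have h3 : |(inner ℝ (gradient f (x + t • u) - g) u : ℝ)| ≤
        ‖gradient f (x + t • u) - g‖ * ‖u‖ := abs_real_inner_le_norm _ _
    rw [inner_sub_left] at h3
    have h4 := abs_le.1 h3
    nlinarith [norm_nonneg u, ht.1]
  have hmono : ∫ t in (0:ℝ)..1, ((inner ℝ g u : ℝ) - ℓ * ‖u‖ ^ 2 * t)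
      ≤ ∫ t in (0:ℝ)..1, (inner ℝ (gradient f (x + t • u)) u : ℝ) := by
    apply intervalIntegral.integral_mono_on zero_le_one
      ((continuous_const.sub (continuous_const.mul continuous_id)).intervalIntegrable 0 1)
      (cont.intervalIntegrable 0 1) key
  have hcomp : ∫ t in (0:ℝ)..1, ((inner ℝ g u : ℝ) - ℓ * ‖u‖ ^ 2 * t)
      = (inner ℝ g u : ℝ) - ℓ / 2 * ‖u‖ ^ 2 := by
    have hii : IntervalIntegrable (fun t : ℝ => ℓ * ‖u‖ ^ 2 * t) volume 0 1 :=
      (continuous_const.mul continuous_id).intervalIntegrable 0 1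
    rw [_root_.intervalIntegral.integral_sub intervalIntegrable_const hii,
      _root_.intervalIntegral.integral_const_mul]
    simp [_root_.integral_id]
    ring
  have hlo : φ 0 + inner ℝ g u - ℓ / 2 * ‖u‖ ^ 2 ≤ φ 1 := by
    rw [hcomp] at hmono
    linarith [ftc ▸ hmono]
  have e0 : φ 0 = f x := by simp [hφdef]
  have e1 : φ 1 = f (x + u) := by simp [hφdef]
  rw [e0, e1] at hub hlo
  exact ⟨hlo, hub⟩

/-- If `f` is concave with `ℓ`-Lipschitz gradient, `A` is symmetric positive definite with
largest eigenvalue `σ` (equivalently, operator norm `σ` attained by some eigenvector), and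
`f̂(x) = E_{w ~ Unif(Bⁿ)}[f(x + A w)]`, then `0 ≤ f(x) − f̂(x) ≤ (ℓ/2)·σ²` for all `x`. -/
theorem smoothed_bias_bound
    (n : ℕ) (ℓ σ : ℝ) (hℓ : 0 ≤ ℓ)
    (f : EuclideanSpace ℝ (Fin n) → ℝ)
    (hf_diff : Differentiable ℝ f) (hf_conc : ConcaveOn ℝ Set.univ f)
    (hf_lip : ∀ x y, ‖gradient f x - gradient f y‖ ≤ ℓ * ‖x - y‖)
    (A : Matrix (Fin n) (Fin n) ℝ) (hA_pd : A.PosDef)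
    -- `σ` bounds the operator norm of `A` ...
    (hσ : ∀ v : EuclideanSpace ℝ (Fin n), ‖Matrix.toEuclideanLin A v‖ ≤ σ * ‖v‖)
    -- ... and is attained as an eigenvalue, so `σ = σ_max(A)` is the largest eigenvalue
    (hσ_eig : ∃ v : EuclideanSpace ℝ (Fin n), v ≠ 0 ∧ Matrix.toEuclideanLin A v = σ • v)
    (fhat : EuclideanSpace ℝ (Fin n) → ℝ)
    (hfhat : ∀ x, fhat x = ∫ w, f (x + Matrix.toEuclideanLin A w) ∂(unifBall n))
    (x : EuclideanSpace ℝ (Fin n)) :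
    0 ≤ f x - fhat x ∧ f x - fhat x ≤ ℓ / 2 * σ ^ 2 := by
  classical
  set T : EuclideanSpace ℝ (Fin n) →ₗ[ℝ] EuclideanSpace ℝ (Fin n) :=
    Matrix.toEuclideanLin A with hT
  set g := gradient f x with hgdef
  set B : Set (EuclideanSpace ℝ (Fin n)) := closedBall 0 1 with hBdef
  set μ := unifBall n with hμdef
  have hσ0 : 0 ≤ σ := by
    obtain ⟨v, hv, hve⟩ := hσ_eig
    have h := hσ v
    rw [hve, norm_smul, Real.norm_eq_abs] at h
    have hv' : 0 < ‖v‖ := norm_pos_iff.2 hv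
    nlinarith [abs_nonneg σ, le_abs_self σ]
  have hB0 : volume B ≠ 0 := (measure_closedBall_pos _ _ one_pos).ne'
  have hBt : volume B ≠ ⊤ := (isCompact_closedBall _ _).measure_lt_top.ne
  have hprob : IsProbabilityMeasure μ := by
    constructor
    rw [hμdef, unifBall, Measure.smul_apply, Measure.restrict_apply_univ, smul_eq_mul,
      ENNReal.inv_mul_cancel hB0 hBt]
  have hae : ∀ᵐ w ∂μ, w ∈ B := by
    rw [hμdef, unifBall]
    exact Measure.ae_smul_measure (ae_restrict_mem measurableSet_closedBall) _
  have hTc : Continuous T := T.continuous_of_finiteDimensional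
  have hFc : Continuous fun w : EuclideanSpace ℝ (Fin n) => f (x + T w) :=
    hf_diff.continuous.comp (continuous_const.add hTc)
  have hint : Integrable (fun w => f (x + T w)) μ := by
    rw [hμdef, unifBall]
    exact ((hFc.continuousOn.integrableOn_compact (isCompact_closedBall _ _))).smul_measure
      (ENNReal.inv_ne_top.2 hB0)
  have hLc : Continuous fun w : EuclideanSpace ℝ (Fin n) => (inner ℝ g (T w) : ℝ) :=
    continuous_const.inner hTc
  have hintL : Integrable (fun w => (inner ℝ g (T w) : ℝ)) μ := by
    rw [hμdef, unifBall]
    exact ((hLc.continuousOn.integrableOn_compact (isCompact_closedBall _ _))).smul_measure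
      (ENNReal.inv_ne_top.2 hB0)
  -- linear term in mean zero
  have hL0 : ∫ w, (inner ℝ g (T w) : ℝ) ∂μ = 0 := by
    have hemb : MeasurableEmbedding (fun w : EuclideanSpace ℝ (Fin n) => -w) :=
      (Homeomorph.neg (EuclideanSpace ℝ (Fin n))).measurableEmbedding
    have hpre : (fun w : EuclideanSpace ℝ (Fin n) => -w) ⁻¹' B = B := by
      ext w; simp [hBdef]
    have h := (Measure.measurePreserving_neg (volume : Measure (EuclideanSpace ℝ (Fin n)))).setIntegral_preimage_emb
      hemb (fun w => (inner ℝ g (T w) : ℝ)) B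
    rw [hpre] at h
    have h2 : ∫ w in B, (inner ℝ g (T (-w)) : ℝ) = - ∫ w in B, (inner ℝ g (T w) : ℝ) := by
      simp_rw [map_neg, inner_neg_right]
      exact integral_neg _
    have h3 : ∫ w in B, (inner ℝ g (T w) : ℝ) = 0 := by
      rw [h2] at h; linarith
    rw [hμdef, unifBall, integral_smul_measure, h3]
    simp
  -- bounds
  have hub : ∫ w, f (x + T w) ∂μ ≤ f x := by
    have hmono : ∫ w, f (x + T w) ∂μ ≤ ∫ w, (f x + inner ℝ g (T w) : ℝ) ∂μ := by
      refine integral_mono hint ((integrable_const (f x)).add hintL) ?_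
      intro w
      exact (descent_lemma hℓ hf_diff hf_conc hf_lip x (T w)).2
    rw [integral_add (integrable_const (f x)) hintL, integral_const, hL0] at hmono
    simpa using hmono
  have hlb : f x - ℓ / 2 * σ ^ 2 ≤ ∫ w, f (x + T w) ∂μ := by
    have hmono : ∫ w, (f x + inner ℝ g (T w) - ℓ / 2 * σ ^ 2 : ℝ) ∂μ
        ≤ ∫ w, f (x + T w) ∂μ := by
      refine integral_mono_ae (((integrable_const (f x)).add hintL).sub (integrable_const (ℓ / 2 * σ ^ 2))) hint ?_
      filter_upwards [hae] with w hw
      have hd := (descent_lemma hℓ hf_diff hf_conc hf_lip x (T w)).1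
      have hw1 : ‖w‖ ≤ 1 := mem_closedBall_zero_iff.1 hw
      have hTw : ‖T w‖ ≤ σ := by
        calc ‖T w‖ ≤ σ * ‖w‖ := hσ w
        _ ≤ σ * 1 := by nlinarith
        _ = σ := mul_one σ
      have hsq : ‖T w‖ ^ 2 ≤ σ ^ 2 := by nlinarith [norm_nonneg (T w)]
      have : ℓ / 2 * ‖T w‖ ^ 2 ≤ ℓ / 2 * σ ^ 2 := by nlinarith
      linarith
    have hcomp2 : ∫ w, (f x + inner ℝ g (T w) - ℓ / 2 * σ ^ 2 : ℝ) ∂μ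
        = f x - ℓ / 2 * σ ^ 2 := by
      have hre : (fun w => (f x + inner ℝ g (T w) - ℓ / 2 * σ ^ 2 : ℝ))
          = fun w => (f x - ℓ / 2 * σ ^ 2) + (inner ℝ g (T w) : ℝ) := by
        funext w; ring
      rw [hre, integral_add (integrable_const _) hintL, integral_const, hL0]
      simp
    rw [hcomp2] at hmono
    exact hmono
  have hf' : fhat x = ∫ w, f (x + T w) ∂μ := hfhat x
  constructor <;> [linarith [hub, hf']; linarith [hlb, hf']]
end

section
/- (Descent lemma for eager self-concordant barrier bandit learning.) Let x^{t+1} = argmin_{x'∈X}[η_t⟨v̂^t, x^t − x'⟩ + (η_t β(t+1)/2)‖x^t − x'‖² + D_R(x', x^t)], where R is a self-concordant barrier, A^t = (∇²R(x^t) + η_t β(t+1) I)^{−1/2}, and suppose η_t ‖A^t v̂^t‖ ≤ 1/2. Then for every p ∈ X: D_R(p, x^{t+1}) + (η_t β(t+1)/2)‖x^{t+1} − p‖² ≤ D_R(p, x^t) + (η_t β(t+1)/2)‖x^t − p‖² + 2η_t²‖A^t v̂^t‖² + η_t⟨v̂^t, x^t − p⟩. -/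
open scoped RealInnerProductSpace

private lemma quad_ineq_aux (l s : ℝ) (hl0 : 0 ≤ l) (hl : l ≤ 1/2) (hs : 0 ≤ s) :
    l * s ≤ 2 * l^2 + s^2 / (2*(1+s)) := by
  have h1 : (0:ℝ) < 2*(1+s) := by linarith
  rw [← sub_nonneg]
  have key : (2 * l^2 + s^2/(2*(1+s))) - l*s
      = (s^2*(1-2*l) + s*(4*l^2-2*l) + 4*l^2)/(2*(1+s)) := by
    field_simp; ring
  rw [key]
  apply div_nonneg _ (le_of_lt h1)
  rcases eq_or_lt_of_le hl with h | h
  · subst h; norm_num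
  · nlinarith [sq_nonneg ((1-2*l)*s - l*(1-2*l)),
      mul_nonneg (mul_nonneg (mul_nonneg hl0 hl0) (by linarith : (0:ℝ) ≤ 1-2*l))
        (by linarith : (0:ℝ) ≤ 3+2*l), h]

private lemma sc_one_dim_aux (f f1 f2 f3 : ℝ → ℝ) (I : Set ℝ)
    (h01 : Set.Icc (0:ℝ) 1 ⊆ I)
    (hd1 : ∀ x ∈ I, HasDerivAt f (f1 x) x)
    (hd2 : ∀ x ∈ I, HasDerivAt f1 (f2 x) x)
    (hd3 : ∀ x ∈ I, HasDerivAt f2 (f3 x) x)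
    (hpos : ∀ x ∈ I, 0 < f2 x)
    (hsc : ∀ x ∈ I, |f3 x| ≤ 2 * (f2 x) ^ ((3:ℝ)/2)) :
    Real.sqrt (f2 0) ^ 2 / (2 * (1 + Real.sqrt (f2 0))) ≤ f 1 - f 0 - f1 0 := by
  have h0I : (0:ℝ) ∈ I := h01 ⟨le_refl 0, zero_le_one⟩
  set a := Real.sqrt (f2 0) with ha_def
  have hf20 : 0 < f2 0 := hpos 0 h0I
  have ha : 0 < a := Real.sqrt_pos.mpr hf20
  have ha2 : a^2 = f2 0 := Real.sq_sqrt hf20.le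
  set θ : ℝ → ℝ := fun x => (Real.sqrt (f2 x))⁻¹ with hθ_def
  have hθd : ∀ x ∈ I, HasDerivAt θ (-(f3 x) / (2 * f2 x * Real.sqrt (f2 x))) x := by
    intro x hx
    have hfx := hpos x hx
    have h1 : HasDerivAt (fun y => Real.sqrt (f2 y)) (f3 x / (2 * Real.sqrt (f2 x))) x :=
      (hd3 x hx).sqrt hfx.ne'
    have h2 := h1.inv (Real.sqrt_ne_zero'.mpr hfx)
    refine h2.congr_deriv ?_
    rw [Real.sq_sqrt hfx.le]
    ring
  have hθbound : ∀ x ∈ I, ‖-(f3 x) / (2 * f2 x * Real.sqrt (f2 x))‖ ≤ 1 := by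
    intro x hx
    have hfx := hpos x hx
    have hs := Real.sqrt_pos.mpr hfx
    have hden : 0 < 2 * f2 x * Real.sqrt (f2 x) := by positivity
    rw [Real.norm_eq_abs, abs_div, abs_neg, abs_of_pos hden, div_le_one hden]
    have hpow : (f2 x) ^ ((3:ℝ)/2) = f2 x * Real.sqrt (f2 x) := by
      rw [show (3:ℝ)/2 = 1 + 1/2 by norm_num, Real.rpow_add hfx, Real.rpow_one,
        Real.sqrt_eq_rpow]
    calc |f3 x| ≤ 2 * (f2 x) ^ ((3:ℝ)/2) := hsc x hx
      _ = 2 * f2 x * Real.sqrt (f2 x) := by rw [hpow]; ring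
  have hθlip : ∀ τ ∈ Set.Icc (0:ℝ) 1, θ τ ≤ θ 0 + τ := by
    intro τ hτ
    have hlip := Convex.norm_image_sub_le_of_norm_hasDerivWithin_le
      (f := θ) (f' := fun x => -(f3 x) / (2 * f2 x * Real.sqrt (f2 x))) (s := Set.Icc (0:ℝ) 1)
      (fun x hx => (hθd x (h01 hx)).hasDerivWithinAt)
      (fun x hx => hθbound x (h01 hx)) (convex_Icc 0 1)
      ⟨le_refl 0, zero_le_one⟩ hτ
    rw [Real.norm_eq_abs, Real.norm_eq_abs, one_mul, sub_zero, abs_of_nonneg hτ.1] at hlip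
    have := abs_le.mp hlip
    linarith [this.2]
  have hf2lb : ∀ τ ∈ Set.Icc (0:ℝ) 1, a^2/(1+a*τ)^2 ≤ f2 τ := by
    intro τ hτ
    have hfτ := hpos τ (h01 hτ)
    have hsτ := Real.sqrt_pos.mpr hfτ
    have hθτ : θ τ ≤ (1 + a*τ)/a := by
      have h := hθlip τ hτ
      have hθ0 : θ 0 = a⁻¹ := rfl
      rw [hθ0] at h
      calc θ τ ≤ a⁻¹ + τ := h
        _ = (1 + a*τ)/a := by field_simp
    have h1aτ : 0 < 1 + a*τ := by nlinarith [hτ.1, ha]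
    have hsqrt_lb : a/(1+a*τ) ≤ Real.sqrt (f2 τ) := by
      have hθτpos : 0 < θ τ := by positivity
      rw [hθ_def] at hθτ
      have h2 : a/(1+a*τ) ≤ ((Real.sqrt (f2 τ))⁻¹)⁻¹ := by
        rw [div_le_iff₀ h1aτ]
        have h3 : (Real.sqrt (f2 τ))⁻¹ * a ≤ (1+a*τ)/a*a :=
          mul_le_mul_of_nonneg_right hθτ ha.le
        rw [div_mul_cancel₀ _ ha.ne'] at h3
        calc a = (Real.sqrt (f2 τ))⁻¹⁻¹ * ((Real.sqrt (f2 τ))⁻¹ * a) := by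
              field_simp
          _ ≤ (Real.sqrt (f2 τ))⁻¹⁻¹ * (1+a*τ) :=
              mul_le_mul_of_nonneg_left h3 (by positivity)
      rwa [inv_inv] at h2
    calc a^2/(1+a*τ)^2 = (a/(1+a*τ))^2 := by rw [div_pow]
      _ ≤ (Real.sqrt (f2 τ))^2 := by
          apply pow_le_pow_left₀ (by positivity) hsqrt_lb
      _ = f2 τ := Real.sq_sqrt hfτ.le
  set q : ℝ → ℝ := fun τ => a^2*τ^2/(2*(1+a*τ)) with hq_def
  set q1 : ℝ → ℝ := fun τ => (a^2*τ + a^3*τ^2/2)/(1+a*τ)^2 with hq1_def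
  have hden : ∀ τ : ℝ, 0 ≤ τ → (0:ℝ) < 1 + a*τ := fun τ hτ => by nlinarith
  have hqd : ∀ τ : ℝ, 0 ≤ τ → HasDerivAt q (q1 τ) τ := by
    intro τ hτ
    have hd := hden τ hτ
    have h1 : HasDerivAt (fun x : ℝ => a^2*x^2) (a^2*(2*τ)) τ := by
      simpa using (hasDerivAt_pow 2 τ).const_mul (a^2)
    have h2 : HasDerivAt (fun x : ℝ => 2*(1+a*x)) (2*(a*1)) τ :=
      (((hasDerivAt_id τ).const_mul a).const_add 1).const_mul 2
    have h3 := h1.div h2 (by positivity)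
    refine h3.congr_deriv ?_
    rw [hq1_def]
    field_simp
    ring
  have hq1d : ∀ τ : ℝ, 0 ≤ τ → HasDerivAt q1 (a^2/(1+a*τ)^3) τ := by
    intro τ hτ
    have hd := hden τ hτ
    have h1 : HasDerivAt (fun x : ℝ => a^2*x + a^3*x^2/2) (a^2 + a^3*τ) τ := by
      have ha1 : HasDerivAt (fun x : ℝ => a^2*x) (a^2*1) τ := (hasDerivAt_id τ).const_mul (a^2)
      have ha2 : HasDerivAt (fun x : ℝ => a^3*x^2/2) (a^3*(2*τ)/2) τ :=
        (((hasDerivAt_pow 2 τ).const_mul (a^3)).div_const 2).congr_deriv (by push_cast; ring)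
      exact (ha1.add ha2).congr_deriv (by ring)
    have hbase : HasDerivAt (fun x : ℝ => 1 + a*x) (a*1) τ :=
      ((hasDerivAt_id τ).const_mul a).const_add 1
    have h2 : HasDerivAt (fun x : ℝ => (1+a*x)^2) (2*(1+a*τ)^1*(a*1)) τ := by
      simpa using hbase.fun_pow 2
    have h3 := h1.div h2 (by positivity)
    refine h3.congr_deriv ?_
    field_simp
    ring
  set g : ℝ → ℝ := fun τ => f1 τ - q1 τ - f1 0 with hg_def
  have hgd : ∀ τ ∈ Set.Icc (0:ℝ) 1, HasDerivAt g (f2 τ - a^2/(1+a*τ)^3) τ :=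
    fun τ hτ => ((hd2 τ (h01 hτ)).sub (hq1d τ hτ.1)).sub_const (f1 0)
  have hgmono : MonotoneOn g (Set.Icc (0:ℝ) 1) := by
    apply monotoneOn_of_deriv_nonneg (convex_Icc 0 1)
    · exact fun τ hτ => (hgd τ hτ).continuousAt.continuousWithinAt
    · intro τ hτ
      rw [interior_Icc] at hτ
      exact ((hgd τ ⟨hτ.1.le, hτ.2.le⟩).differentiableAt).differentiableWithinAt
    · intro τ hτ
      rw [interior_Icc] at hτ
      have hτ' : τ ∈ Set.Icc (0:ℝ) 1 := ⟨hτ.1.le, hτ.2.le⟩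
      rw [(hgd τ hτ').deriv]
      have hd := hden τ hτ'.1
      have h1 : a^2/(1+a*τ)^3 ≤ a^2/(1+a*τ)^2 := by
        apply div_le_div_of_nonneg_left (sq_nonneg a) (by positivity)
        calc (1+a*τ)^2 = (1+a*τ)^2 * 1 := by ring
          _ ≤ (1+a*τ)^2 * (1+a*τ) :=
              mul_le_mul_of_nonneg_left (by nlinarith [hτ'.1]) (by positivity)
          _ = (1+a*τ)^3 := by ring
      linarith [hf2lb τ hτ']
  have hgnonneg : ∀ τ ∈ Set.Icc (0:ℝ) 1, 0 ≤ g τ := by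
    intro τ hτ
    have h0 : g 0 = 0 := by
      rw [hg_def, hq1_def]
      simp
    have := hgmono ⟨le_refl 0, zero_le_one⟩ hτ hτ.1
    rw [h0] at this
    exact this
  set hfun : ℝ → ℝ := fun τ => f τ - q τ - τ * f1 0 with hh_def
  have hhd : ∀ τ ∈ Set.Icc (0:ℝ) 1, HasDerivAt hfun (g τ) τ :=
    fun τ hτ => ((hd1 τ (h01 hτ)).sub (hqd τ hτ.1)).sub (hasDerivAt_mul_const (f1 0))
  have hhmono : MonotoneOn hfun (Set.Icc (0:ℝ) 1) := by
    apply monotoneOn_of_deriv_nonneg (convex_Icc 0 1)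
    · exact fun τ hτ => (hhd τ hτ).continuousAt.continuousWithinAt
    · intro τ hτ
      rw [interior_Icc] at hτ
      exact ((hhd τ ⟨hτ.1.le, hτ.2.le⟩).differentiableAt).differentiableWithinAt
    · intro τ hτ
      rw [interior_Icc] at hτ
      have hτ' : τ ∈ Set.Icc (0:ℝ) 1 := ⟨hτ.1.le, hτ.2.le⟩
      rw [(hhd τ hτ').deriv]
      exact hgnonneg τ hτ'
  have hfin := hhmono ⟨le_refl 0, zero_le_one⟩ ⟨zero_le_one, le_refl 1⟩ zero_le_one
  have hq0 : q 0 = 0 := by rw [hq_def]; simp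
  have hq1v : q 1 = a^2/(2*(1+a)) := by rw [hq_def]; simp
  rw [hh_def] at hfin
  simp only [hq0, hq1v] at hfin
  linarith

private lemma iteratedFDeriv_three_apply_aux
    {E F : Type*} [NormedAddCommGroup E] [NormedSpace ℝ E] [NormedAddCommGroup F]
    [NormedSpace ℝ F] (f : E → F) (z : E) (m : Fin 3 → E) :
    iteratedFDeriv ℝ 3 f z m = fderiv ℝ (fderiv ℝ (fderiv ℝ f)) z (m 0) (m 1) (m 2) := by
  have h := iteratedFDeriv_succ_apply_right (𝕜 := ℝ) (f := f) (x := z) (n := 2) m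
  rw [h, iteratedFDeriv_two_apply]
  congr 1

set_option maxHeartbeats 2000000 in
/-- Descent lemma for eager self-concordant barrier bandit learning: if
`x^{t+1}` minimizes `x' ↦ η_t⟨v̂, x^t − x'⟩ + (η_t β(t+1)/2)‖x^t − x'‖² + D_R(x', x^t)`
over `X`, `A = (∇²R(x^t) + η_t β(t+1) I)^{−1/2}`, and the Newton decrement satisfies
`η_t ‖A v̂‖ ≤ 1/2`, then for every `p ∈ X`:
`D_R(p, x^{t+1}) + (η_t β(t+1)/2)‖x^{t+1} − p‖² ≤
  D_R(p, x^t) + (η_t β(t+1)/2)‖x^t − p‖² + 2η_t²‖A v̂‖² + η_t⟨v̂, x^t − p⟩`. -/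
theorem eager_barrier_descent_lemma
    (n : ℕ) (X : Set (EuclideanSpace ℝ (Fin n)))
    (hX_closed : IsClosed X) (hX_conv : Convex ℝ X)
    (R : EuclideanSpace ℝ (Fin n) → ℝ)
    (hR_diff : ∀ y ∈ interior X, DifferentiableAt ℝ R y)
    (hR_C3 : ContDiffOn ℝ 3 R (interior X))
    -- positive definite Hessian
    (hR_pd : ∀ y ∈ interior X, ∀ h : EuclideanSpace ℝ (Fin n), h ≠ 0 →
      0 < iteratedFDerivWithin ℝ 2 R (interior X) y ![h, h])
    -- self-concordance
    (hR_sc : ∀ y ∈ interior X, ∀ h : EuclideanSpace ℝ (Fin n),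
      |iteratedFDerivWithin ℝ 3 R (interior X) y ![h, h, h]| ≤
        2 * (iteratedFDerivWithin ℝ 2 R (interior X) y ![h, h]) ^ ((3 : ℝ) / 2))
    -- `R` is a barrier: it blows up at the boundary
    (hR_barrier : ∀ y ∈ frontier X,
      Filter.Tendsto R (nhdsWithin y (interior X)) Filter.atTop)
    (β ηt : ℝ) (t : ℕ) (hβ : 0 < β) (hηt : 0 < ηt)
    (xt : EuclideanSpace ℝ (Fin n)) (hxt : xt ∈ interior X)
    -- `H` is the Hessian `∇²R(x^t)` as a linear operator
    (H : EuclideanSpace ℝ (Fin n) →L[ℝ] EuclideanSpace ℝ (Fin n))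
    (hH : ∀ u v : EuclideanSpace ℝ (Fin n),
      iteratedFDerivWithin ℝ 2 R (interior X) xt ![u, v] = ⟪u, H v⟫)
    -- `A = (H + η_t β(t+1) I)^{−1/2}`
    (A : EuclideanSpace ℝ (Fin n) →L[ℝ] EuclideanSpace ℝ (Fin n))
    (hA_symm : ∀ u v : EuclideanSpace ℝ (Fin n), ⟪A u, v⟫ = ⟪u, A v⟫)
    (hA_pos : ∀ v : EuclideanSpace ℝ (Fin n), 0 ≤ ⟪A v, v⟫)
    (hA_sq : ∀ v : EuclideanSpace ℝ (Fin n),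
      H (A (A v)) + (ηt * β * (t + 1)) • (A (A v)) = v)
    -- the gradient estimate and the Newton-decrement condition
    (vt : EuclideanSpace ℝ (Fin n)) (hnewton : ηt * ‖A vt‖ ≤ 1 / 2)
    -- the Bregman divergence of `R`
    (D : EuclideanSpace ℝ (Fin n) → EuclideanSpace ℝ (Fin n) → ℝ)
    (hD : ∀ x' y, D x' y = R x' - R y - ⟪gradient R y, x' - y⟫)
    -- the prox update
    (x1 : EuclideanSpace ℝ (Fin n)) (hx1 : x1 ∈ interior X)
    (hmin : IsMinOn
      (fun x' => ηt * ⟪vt, xt - x'⟫ + ηt * β * (t + 1) / 2 * ‖xt - x'‖ ^ 2 + D x' xt)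
      X x1)
    (p : EuclideanSpace ℝ (Fin n)) (hp : p ∈ X) :
    D p x1 + ηt * β * (t + 1) / 2 * ‖x1 - p‖ ^ 2 ≤
      D p xt + ηt * β * (t + 1) / 2 * ‖xt - p‖ ^ 2 +
        2 * ηt ^ 2 * ‖A vt‖ ^ 2 + ηt * ⟪vt, xt - p⟫ := by
  have hinner : ∀ (f : EuclideanSpace ℝ (Fin n) → ℝ) (y h : EuclideanSpace ℝ (Fin n)),
      ⟪gradient f y, h⟫ = fderiv ℝ f y h := by
    intro f y h
    rw [gradient]
    exact InnerProductSpace.toDual_symm_apply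
  set u : EuclideanSpace ℝ (Fin n) := x1 - xt with hu_def
  -- ======================== Part 1 : first-order optimality ========================
  have hopt : gradient R x1 - gradient R xt = ηt • vt - (ηt * β * (t + 1)) • u := by
    set c2 : ℝ := ηt * β * (t + 1) / 2 with hc2
    set F : EuclideanSpace ℝ (Fin n) → ℝ := fun x' =>
      ηt * ⟪vt, xt - x'⟫ + c2 * ⟪xt - x', xt - x'⟫ +
        (R x' - R xt - ⟪gradient R xt, x' - xt⟫) with hF_def
    have hFeq : (fun x' => ηt * ⟪vt, xt - x'⟫ + ηt * β * (t + 1) / 2 * ‖xt - x'‖ ^ 2 + D x' xt)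
        = F := by
      funext x'
      simp only [hF_def, hD, ← real_inner_self_eq_norm_sq]
      rw [hc2]
    rw [hFeq] at hmin
    have hloc : IsLocalMin F x1 := hmin.isLocalMin (mem_interior_iff_mem_nhds.mp hx1)
    have hsub : HasFDerivAt (fun x' : EuclideanSpace ℝ (Fin n) => xt - x')
        (-(ContinuousLinearMap.id ℝ _)) x1 := (hasFDerivAt_id x1).const_sub xt
    have h1 := ((hasFDerivAt_const vt x1).inner ℝ hsub).const_mul ηt
    have h2 := (hsub.inner ℝ hsub).const_mul c2
    have h3 : HasFDerivAt (fun x' : EuclideanSpace ℝ (Fin n) => x' - xt)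
        (ContinuousLinearMap.id ℝ _) x1 := (hasFDerivAt_id x1).sub_const xt
    have h4 := ((hR_diff x1 hx1).hasFDerivAt.sub_const (R xt)).sub
        ((hasFDerivAt_const (gradient R xt) x1).inner ℝ h3)
    have hF' := (h1.add h2).add h4
    have hzero := hloc.hasFDerivAt_eq_zero hF'
    have hscalar : ∀ h : EuclideanSpace ℝ (Fin n),
        -(ηt * ⟪vt, h⟫) - 2 * c2 * ⟪xt - x1, h⟫ + (fderiv ℝ R x1 h - ⟪gradient R xt, h⟫) = 0 := by
      intro h
      have hz := congrFun (congrArg (DFunLike.coe) hzero) h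
      simp only [ContinuousLinearMap.add_apply, ContinuousLinearMap.coe_comp', Function.comp_apply,
        ContinuousLinearMap.smul_apply, ContinuousLinearMap.prod_apply, fderivInnerCLM_apply,
        ContinuousLinearMap.sub_apply, ContinuousLinearMap.neg_apply, ContinuousLinearMap.coe_id',
        id_eq, ContinuousLinearMap.zero_apply, ContinuousLinearMap.coe_smul',
        Pi.smul_apply, smul_eq_mul, inner_zero_left, inner_zero_right, inner_neg_left,
        inner_neg_right, ContinuousLinearMap.zero_comp] at hz ⊢
      linear_combination hz - c2 * real_inner_comm h (xt - x1)
    have hvec : ∀ h : EuclideanSpace ℝ (Fin n),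
        ⟪gradient R x1 - gradient R xt - ηt • vt + (2*c2) • (x1 - xt), h⟫ = 0 := by
      intro h
      have hs := hscalar h
      rw [← hinner R x1 h] at hs
      simp only [inner_sub_left, inner_add_left, real_inner_smul_left]
      linear_combination hs + 2*c2*(inner_sub_left (𝕜 := ℝ) xt x1 h)
    have hzero' := inner_self_eq_zero.mp
      (hvec (gradient R x1 - gradient R xt - ηt • vt + (2*c2) • (x1 - xt)))
    have h2c2 : (2*c2) = ηt * β * (t + 1) := by rw [hc2]; ring
    rw [h2c2] at hzero'
    have hfin : (gradient R x1 - gradient R xt) - (ηt • vt - (ηt * β * (t + 1)) • u) = 0 := by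
      rw [← hzero', hu_def]; abel
    exact sub_eq_zero.mp hfin
  -- ======================== Part 2 : the key inequality ========================
  set c : ℝ := ηt * β * (t + 1) with hc_def
  have hcpos : 0 < c := by
    have : (0:ℝ) < (t:ℝ) + 1 := by positivity
    rw [hc_def]; positivity
  -- A ∘ A ∘ (H + c • id) = id
  have hAAM : ∀ w : EuclideanSpace ℝ (Fin n), A (A (H w + c • w)) = w := by
    have hTS : ((H.toLinearMap + c • LinearMap.id) * ((A.comp A).toLinearMap) :
        EuclideanSpace ℝ (Fin n) →ₗ[ℝ] EuclideanSpace ℝ (Fin n)) = 1 := by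
      apply LinearMap.ext
      intro w
      simpa using hA_sq w
    have hST := mul_eq_one_comm.mp hTS
    intro w
    have := LinearMap.ext_iff.mp hST w
    simpa using this
  have hKey : ηt * ⟪vt, u⟫ ≤ 2*ηt^2*‖A vt‖^2 + c/2*‖u‖^2 + (R x1 - R xt - ⟪gradient R xt, u⟫) := by
    rcases eq_or_ne u 0 with hu | hu
    · have hx1xt : x1 = xt := by
        have := sub_eq_zero.mp (hu_def ▸ hu : x1 - xt = (0:EuclideanSpace ℝ (Fin n)))
        exact this
      rw [hu, hx1xt]
      simp only [inner_zero_right, mul_zero, norm_zero, sub_self, sub_zero, add_zero]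
      positivity
    · -- lower bound for the Bregman divergence via self-concordance
      set a : ℝ := Real.sqrt (⟪u, H u⟫) with ha_def
      have hha : 0 < ⟪u, H u⟫ := by
        have := hR_pd xt hxt u hu
        rwa [hH] at this
      have hDlb : a ^ 2 / (2 * (1 + a)) ≤ R x1 - R xt - ⟪gradient R xt, u⟫ := by
        rw [hinner R xt u]
        -- setup of the one-dimensional restriction
        have hso : IsOpen (interior X) := isOpen_interior
        have hCd1 : ∀ y ∈ interior X, HasFDerivAt R (fderiv ℝ R y) y :=
          fun y hy => (hR_diff y hy).hasFDerivAt
        have hC2 : ContDiffOn ℝ 2 (fun y => fderiv ℝ R y) (interior X) :=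
          hR_C3.fderiv_of_isOpen hso (by norm_num)
        have hCd2 : ∀ y ∈ interior X,
            HasFDerivAt (fun y => fderiv ℝ R y) (fderiv ℝ (fderiv ℝ R) y) y :=
          fun y hy => ((hC2.differentiableOn (by norm_num)).differentiableAt
            (hso.mem_nhds hy)).hasFDerivAt
        have hC1 : ContDiffOn ℝ 1 (fun y => fderiv ℝ (fderiv ℝ R) y) (interior X) :=
          hC2.fderiv_of_isOpen hso (by norm_num)
        have hCd3 : ∀ y ∈ interior X, HasFDerivAt (fun y => fderiv ℝ (fderiv ℝ R) y)
            (fderiv ℝ (fderiv ℝ (fderiv ℝ R)) y) y :=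
          fun y hy => ((hC1.differentiableOn (by norm_num)).differentiableAt
            (hso.mem_nhds hy)).hasFDerivAt
        have hIt2 : ∀ y ∈ interior X, ∀ w w' : EuclideanSpace ℝ (Fin n),
            iteratedFDerivWithin ℝ 2 R (interior X) y ![w, w'] =
              fderiv ℝ (fderiv ℝ R) y w w' := by
          intro y hy w w'
          rw [show iteratedFDerivWithin ℝ 2 R (interior X) y = iteratedFDeriv ℝ 2 R y from
            iteratedFDerivWithin_of_isOpen 2 hso hy, iteratedFDeriv_two_apply]
          simp
        have hIt3 : ∀ y ∈ interior X, ∀ w : EuclideanSpace ℝ (Fin n),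
            iteratedFDerivWithin ℝ 3 R (interior X) y ![w, w, w] =
              fderiv ℝ (fderiv ℝ (fderiv ℝ R)) y w w w := by
          intro y hy w
          rw [show iteratedFDerivWithin ℝ 3 R (interior X) y = iteratedFDeriv ℝ 3 R y from
            iteratedFDerivWithin_of_isOpen 3 hso hy, iteratedFDeriv_three_apply_aux]
          simp
        set γ : ℝ → EuclideanSpace ℝ (Fin n) := fun τ => xt + τ • u with hγ_def
        have hγd : ∀ τ : ℝ, HasDerivAt γ u τ := by
          intro τ
          have := ((hasDerivAt_id τ).smul_const u).const_add xt
          exact this.congr_deriv (one_smul ℝ u)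
        set I : Set ℝ := γ ⁻¹' (interior X) with hI_def
        have hIcc : Set.Icc (0:ℝ) 1 ⊆ I := by
          intro τ hτ
          have hconvI : Convex ℝ (interior X) := hX_conv.interior
          have hmem := hconvI hxt hx1 (by linarith [hτ.2] : (0:ℝ) ≤ 1 - τ) hτ.1 (by ring)
          have hγτ : γ τ = (1 - τ) • xt + τ • x1 := by
            rw [hγ_def]
            simp only [hu_def, smul_sub, sub_smul, one_smul]
            abel
          simpa [hI_def, Set.mem_preimage, hγτ] using hmem
        set f : ℝ → ℝ := fun τ => R (γ τ) with hf_def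
        set f1 : ℝ → ℝ := fun τ => fderiv ℝ R (γ τ) u with hf1_def
        set f2 : ℝ → ℝ := fun τ => fderiv ℝ (fderiv ℝ R) (γ τ) u u with hf2_def
        set f3 : ℝ → ℝ := fun τ => fderiv ℝ (fderiv ℝ (fderiv ℝ R)) (γ τ) u u u with hf3_def
        have hγmem : ∀ τ ∈ I, γ τ ∈ interior X := fun τ hτ => hτ
        have hd1 : ∀ τ ∈ I, HasDerivAt f (f1 τ) τ :=
          fun τ hτ => (hCd1 _ (hγmem τ hτ)).comp_hasDerivAt τ (hγd τ)
        have hd2 : ∀ τ ∈ I, HasDerivAt f1 (f2 τ) τ := by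
          intro τ hτ
          have hin : HasDerivAt (fun τ => fderiv ℝ R (γ τ)) (fderiv ℝ (fderiv ℝ R) (γ τ) u) τ :=
            (hCd2 _ (hγmem τ hτ)).comp_hasDerivAt τ (hγd τ)
          have := (ContinuousLinearMap.apply ℝ ℝ u).hasFDerivAt.comp_hasDerivAt τ hin
          exact this
        have hd3 : ∀ τ ∈ I, HasDerivAt f2 (f3 τ) τ := by
          intro τ hτ
          have hin : HasDerivAt (fun τ => fderiv ℝ (fderiv ℝ R) (γ τ))
              (fderiv ℝ (fderiv ℝ (fderiv ℝ R)) (γ τ) u) τ := by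
            have := (hCd3 _ (hγmem τ hτ)).comp_hasDerivAt (E := (EuclideanSpace ℝ (Fin n) →L[ℝ] EuclideanSpace ℝ (Fin n) →L[ℝ] ℝ)) τ (hγd τ)
            exact this
          have h2 := (ContinuousLinearMap.apply ℝ (EuclideanSpace ℝ (Fin n) →L[ℝ] ℝ)
            u).hasFDerivAt.comp_hasDerivAt (F := (EuclideanSpace ℝ (Fin n) →L[ℝ] EuclideanSpace ℝ (Fin n) →L[ℝ] ℝ)) τ hin
          have h3 := (ContinuousLinearMap.apply ℝ ℝ u).hasFDerivAt.comp_hasDerivAt τ h2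
          exact h3
        have hpos' : ∀ τ ∈ I, 0 < f2 τ := by
          intro τ hτ
          have := hR_pd _ (hγmem τ hτ) u hu
          rwa [hIt2 _ (hγmem τ hτ)] at this
        have hsc' : ∀ τ ∈ I, |f3 τ| ≤ 2 * (f2 τ) ^ ((3:ℝ)/2) := by
          intro τ hτ
          have := hR_sc _ (hγmem τ hτ) u
          rwa [hIt2 _ (hγmem τ hτ), hIt3 _ (hγmem τ hτ)] at this
        have hmain := sc_one_dim_aux f f1 f2 f3 I hIcc hd1 hd2 hd3 hpos' hsc'
        have hγ0 : γ 0 = xt := by rw [hγ_def]; simp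
        have hγ1 : γ 1 = x1 := by rw [hγ_def, hu_def]; simp
        have hf20 : f2 0 = ⟪u, H u⟫ := by
          rw [hf2_def]
          simp only [hγ0]
          rw [← hIt2 xt hxt u u, hH]
        rw [hf_def, hf1_def] at hmain
        simp only [hγ0, hγ1] at hmain
        rw [hf20] at hmain
        exact hmain
      -- Cauchy–Schwarz in the `A`-geometry
      set z : EuclideanSpace ℝ (Fin n) := A (H u + c • u) with hz_def
      have hvz : ⟪vt, u⟫ = ⟪A vt, z⟫ := by
        rw [hz_def, hA_symm vt (A (H u + c • u)), hAAM u]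
      have hz2 : ‖z‖^2 = ⟪H u, u⟫ + c*‖u‖^2 := by
        rw [← real_inner_self_eq_norm_sq, hz_def, hA_symm (H u + c • u) (A (H u + c • u)),
          hAAM u, inner_add_left, real_inner_smul_left, real_inner_self_eq_norm_sq]
      have ha2 : a^2 = ⟪u, H u⟫ := Real.sq_sqrt hha.le
      have ha_pos : 0 < a := Real.sqrt_pos.mpr hha
      have hz2' : ‖z‖^2 = a^2 + c*‖u‖^2 := by
        rw [hz2, ha2, real_inner_comm]
      have has : a ≤ ‖z‖ := by
        have h1 : a^2 ≤ ‖z‖^2 := by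
          rw [hz2']
          nlinarith [norm_nonneg u, hcpos]
        nlinarith [norm_nonneg z, ha_pos]
      have hcs : ηt * ⟪vt, u⟫ ≤ (ηt * ‖A vt‖) * ‖z‖ := by
        rw [hvz]
        have h1 := real_inner_le_norm (A vt) z
        nlinarith [hηt.le]
      have hquad := quad_ineq_aux (ηt * ‖A vt‖) ‖z‖
        (by positivity) hnewton (norm_nonneg z)
      have hsplit : ‖z‖^2/(2*(1+‖z‖)) ≤ a^2/(2*(1+a)) + c*‖u‖^2/2 := by
        have hz_nonneg : (0:ℝ) ≤ ‖z‖ := norm_nonneg z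
        have hd1 : (0:ℝ) < 2*(1+a) := by linarith
        have hd2 : (0:ℝ) < 2*(1+‖z‖) := by linarith
        rw [hz2', add_div]
        have e1 : a^2/(2*(1+‖z‖)) ≤ a^2/(2*(1+a)) :=
          div_le_div_of_nonneg_left (sq_nonneg a) hd1 (by linarith)
        have e2 : c*‖u‖^2/(2*(1+‖z‖)) ≤ c*‖u‖^2/2 :=
          div_le_div_of_nonneg_left (by positivity) (by norm_num) (by linarith)
        linarith
      have hlam : (ηt * ‖A vt‖)^2 = ηt^2*‖A vt‖^2 := by ring
      linarith [hcs, hquad, hsplit, hDlb]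
  -- ======================== Part 3 : assembling ========================
  rw [hD p x1, hD p xt]
  set g1 := gradient R x1 with hg1_def
  set gt := gradient R xt with hgt_def
  have e1 : ⟪g1, p - x1⟫ = ⟪gt, p - x1⟫ + ηt*⟪vt, p - x1⟫ - c*⟪u, p - x1⟫ := by
    have hg1eq : g1 = gt + (ηt • vt - c • u) := by
      rw [hg1_def, hgt_def, ← hopt]
      abel
    rw [hg1eq]
    simp only [inner_add_left, inner_sub_left, real_inner_smul_left]
    ring
  have e2 : ⟪gt, p - xt⟫ = ⟪gt, p - x1⟫ + ⟪gt, u⟫ := by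
    rw [← inner_add_right]
    congr 1
    rw [hu_def]
    abel
  have e3 : ηt * ⟪vt, xt - p⟫ = -(ηt * ⟪vt, p - x1⟫) - ηt * ⟪vt, u⟫ := by
    have hxp : xt - p = -(p - x1) - u := by rw [hu_def]; abel
    rw [hxp, inner_sub_right, inner_neg_right]
    ring
  have e4 : c/2 * ‖xt - p‖^2 = c/2 * ‖x1 - p‖^2 - c*⟪x1 - p, u⟫ + c/2 * ‖u‖^2 := by
    have hxp : xt - p = (x1 - p) - u := by rw [hu_def]; abel
    rw [hxp, @norm_sub_sq_real]
    ring
  have e5 : c*⟪u, p - x1⟫ = -(c*⟪x1 - p, u⟫) := by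
    have h1 : ⟪u, p - x1⟫ = ⟪p - x1, u⟫ := real_inner_comm (p - x1) u
    have h2 : ⟪p - x1, u⟫ = -⟪x1 - p, u⟫ := by
      rw [show p - x1 = -(x1 - p) by abel, inner_neg_left]
    rw [h1, h2]
    ring
  linarith [hKey, e1, e2, e3, e4, e5]
end

section
/- In the Kelly auction, each player's payoff u_i(x) = Σ_s [g_i q_s x_{is}/(d_s + Σ_j x_{js}) − x_{is}] has a partial Hessian in its own variables that is a diagonal matrix with entries −2 g_i q_s (d_s + Σ_{j≠i} x_{js}) / (d_s + Σ_j x_{js})³, and therefore ∇²_{ii} u_i(x) ⪯ −(2 g_i min_s{q_s d_s} / (Σ_s d_s + Σ_i B_i)³)·I on the feasible set where all x_{js} ≥ 0 and Σ_s x_{is} ≤ B_i. -/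
open Filter

/-- First derivative of `t ↦ g q t/(t+a) - t`. -/
lemma kelly_aux_d1 (g q a t : ℝ) (ht : t + a ≠ 0) :
    HasDerivAt (fun t => g * q * t / (t + a) - t) (g * q * a / (t + a) ^ 2 - 1) t := by
  have h1 : HasDerivAt (fun t : ℝ => g * q * t) (g * q) t := by
    simpa using (hasDerivAt_id t).const_mul (g * q)
  have h2 : HasDerivAt (fun t : ℝ => t + a) 1 t := (hasDerivAt_id t).add_const a
  have h3 := (h1.fun_div h2 ht).fun_sub (hasDerivAt_id' t)
  exact h3.congr_deriv (by field_simp; ring)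

/-- Second derivative of `t ↦ g q t/(t+a) - t`. -/
lemma kelly_aux_d2 (g q a t : ℝ) (ht : t + a ≠ 0) :
    HasDerivAt (fun t => g * q * a / (t + a) ^ 2 - 1)
      (-(2 * g * q * a) / (t + a) ^ 3) t := by
  have h1 : HasDerivAt (fun t : ℝ => g * q * a) 0 t := hasDerivAt_const _ _
  have h2 : HasDerivAt (fun t : ℝ => (t + a) ^ 2) (2 * (t + a)) t := by
    simpa using ((hasDerivAt_id t).add_const a).fun_pow 2
  have hne : (t + a) ^ 2 ≠ 0 := pow_ne_zero _ ht
  have h3 := (h1.fun_div h2 hne).sub_const 1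
  exact h3.congr_deriv (by field_simp; ring)

/-- In the Kelly auction, the partial Hessian of player `i₀`'s payoff in its own bid
variables is diagonal with entries `−2 g q_s (d_s + Σ_{j≠i₀} x_{js})/(d_s + Σ_j x_{js})³`,
and hence satisfies
`∇²_{i₀i₀} u_{i₀}(x) ⪯ −(2 g min_s{q_s d_s}/(Σ_s d_s + Σ_j B_j)³) I` on the feasible set. -/
theorem kelly_own_hessian
    (N S : ℕ) (hS : 0 < S)
    (g : ℝ) (hg : 0 < g)
    (q d : Fin S → ℝ) (hq : ∀ s, 0 < q s) (hd : ∀ s, 0 < d s)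
    (B : Fin N → ℝ) (hB : ∀ j, 0 < B j)
    (i₀ : Fin N) (x : Fin N → Fin S → ℝ)
    (hx_nonneg : ∀ j s, 0 ≤ x j s) (hx_budget : ∀ j, ∑ s, x j s ≤ B j)
    -- player `i₀`'s payoff as a function of its own bid vector `y`
    (U : EuclideanSpace ℝ (Fin S) → ℝ)
    (hU : ∀ y : EuclideanSpace ℝ (Fin S), U y =
      ∑ s, (g * q s * y s / (d s + ∑ j, (if j = i₀ then y s else x j s)) - y s)) :
    (∀ h : EuclideanSpace ℝ (Fin S),
      iteratedFDeriv ℝ 2 U (WithLp.toLp 2 (fun s => x i₀ s) : EuclideanSpace ℝ (Fin S)) ![h, h] =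
        ∑ s, (-(2 * g * q s * (d s + ∑ j ∈ Finset.univ.erase i₀, x j s)) /
            (d s + ∑ j, x j s) ^ 3) * (h s) ^ 2)
    ∧ (∀ h : EuclideanSpace ℝ (Fin S),
      iteratedFDeriv ℝ 2 U (WithLp.toLp 2 (fun s => x i₀ s) : EuclideanSpace ℝ (Fin S)) ![h, h] ≤
        -(2 * g * (Finset.univ.inf' (Finset.univ_nonempty_iff.mpr ⟨⟨0, hS⟩⟩)
              fun s => q s * d s) /
            ((∑ s, d s) + ∑ j, B j) ^ 3) * ‖h‖ ^ 2) := by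
  classical
  -- the "other players" part of the denominator
  set a : Fin S → ℝ := fun s => d s + ∑ j ∈ Finset.univ.erase i₀, x j s with ha_def
  have ha_pos : ∀ s, 0 < a s := fun s =>
    add_pos_of_pos_of_nonneg (hd s) (Finset.sum_nonneg fun j _ => hx_nonneg j s)
  -- rewrite the denominator sums
  have hsum : ∀ (t : ℝ) (s : Fin S),
      (d s + ∑ j, (if j = i₀ then t else x j s)) = t + a s := by
    intro t s
    have h1 : (∑ j, (if j = i₀ then t else x j s))
        = t + ∑ j ∈ Finset.univ.erase i₀, x j s := by
      rw [← Finset.add_sum_erase Finset.univ _ (Finset.mem_univ i₀), if_pos rfl]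
      congr 1
      refine Finset.sum_congr rfl fun j hj => ?_
      rw [if_neg (Finset.ne_of_mem_erase hj)]
    rw [h1, ha_def]; ring
  have hU' : ∀ y : EuclideanSpace ℝ (Fin S),
      U y = ∑ s, (g * q s * y s / (y s + a s) - y s) := by
    intro y; rw [hU y]
    exact Finset.sum_congr rfl fun s _ => by rw [hsum (y s) s]
  -- the point of evaluation
  set p : EuclideanSpace ℝ (Fin S) := (WithLp.toLp 2 (fun s => x i₀ s) : EuclideanSpace ℝ (Fin S)) with hp_def
  have hp_pos : ∀ s, 0 < p s + a s := fun s =>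
    add_pos_of_nonneg_of_pos (hx_nonneg i₀ s) (ha_pos s)
  have hproj : ∀ (s : Fin S) (y : EuclideanSpace ℝ (Fin S)),
      HasFDerivAt (fun z : EuclideanSpace ℝ (Fin S) => z s)
        (EuclideanSpace.proj s : EuclideanSpace ℝ (Fin S) →L[ℝ] ℝ) y := fun s y =>
    (EuclideanSpace.proj (𝕜 := ℝ) s).hasFDerivAt
  -- first derivative of U
  set L : EuclideanSpace ℝ (Fin S) → (EuclideanSpace ℝ (Fin S) →L[ℝ] ℝ) := fun y =>
    ∑ s, (g * q s * a s / (y s + a s) ^ 2 - 1) •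
      (EuclideanSpace.proj s : EuclideanSpace ℝ (Fin S) →L[ℝ] ℝ)
    with hL_def
  have hLderiv : ∀ y : EuclideanSpace ℝ (Fin S),
      (∀ s, y s + a s ≠ 0) → HasFDerivAt U (L y) y := by
    intro y hy
    have hterm : ∀ s : Fin S, HasFDerivAt
        (fun z : EuclideanSpace ℝ (Fin S) => g * q s * z s / (z s + a s) - z s)
        ((g * q s * a s / (y s + a s) ^ 2 - 1) •
          (EuclideanSpace.proj s : EuclideanSpace ℝ (Fin S) →L[ℝ] ℝ)) y := by
      intro s
      exact (kelly_aux_d1 g (q s) (a s) (y s) (hy s)).comp_hasFDerivAt y (hproj s y)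
    have : HasFDerivAt
        (fun z : EuclideanSpace ℝ (Fin S) => ∑ s, (g * q s * z s / (z s + a s) - z s))
        (L y) y := HasFDerivAt.fun_sum fun s _ => hterm s
    exact this.congr_of_eventuallyEq (Filter.Eventually.of_forall fun z => (hU' z))
  -- open set where denominators are positive
  set V : Set (EuclideanSpace ℝ (Fin S)) := {y | ∀ s, 0 < y s + a s} with hV_def
  have hV_open : IsOpen V := by
    have : V = ⋂ s, {y : EuclideanSpace ℝ (Fin S) | 0 < y s + a s} := by
      ext y; simp [hV_def, Set.mem_iInter]
    rw [this]
    refine isOpen_iInter_of_finite fun s => ?_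
    have hc : Continuous (fun y : EuclideanSpace ℝ (Fin S) => y s + a s) :=
      ((EuclideanSpace.proj (𝕜 := ℝ) s).continuous).add continuous_const
    exact isOpen_lt continuous_const hc
  have hpV : p ∈ V := hp_pos
  -- fderiv U = L near p
  have hEv : fderiv ℝ U =ᶠ[nhds p] L := by
    filter_upwards [hV_open.mem_nhds hpV] with y hy
    exact (hLderiv y fun s => (hy s).ne').fderiv
  -- derivative of L at p
  set M : EuclideanSpace ℝ (Fin S) →L[ℝ] EuclideanSpace ℝ (Fin S) →L[ℝ] ℝ :=
    ∑ s, ((-(2 * g * q s * a s) / (p s + a s) ^ 3) •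
        (EuclideanSpace.proj s : EuclideanSpace ℝ (Fin S) →L[ℝ] ℝ)).smulRight
        (EuclideanSpace.proj s : EuclideanSpace ℝ (Fin S) →L[ℝ] ℝ)
    with hM_def
  have hMderiv : HasFDerivAt L M p := by
    refine HasFDerivAt.fun_sum fun s _ => ?_
    have hc : HasFDerivAt (fun z : EuclideanSpace ℝ (Fin S) =>
        g * q s * a s / (z s + a s) ^ 2 - 1)
        ((-(2 * g * q s * a s) / (p s + a s) ^ 3) •
          (EuclideanSpace.proj s : EuclideanSpace ℝ (Fin S) →L[ℝ] ℝ)) p :=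
      by have := (kelly_aux_d2 g (q s) (a s) (p s) (hp_pos s).ne').comp_hasFDerivAt p (hproj s p); exact this
    exact hc.smul_const (EuclideanSpace.proj s : EuclideanSpace ℝ (Fin S) →L[ℝ] ℝ)
  have hsnd : fderiv ℝ (fderiv ℝ U) p = M := by
    rw [hEv.fderiv_eq]
    exact hMderiv.fderiv
  -- the key diagonal formula
  have key : ∀ h : EuclideanSpace ℝ (Fin S),
      iteratedFDeriv ℝ 2 U p ![h, h] =
        ∑ s, (-(2 * g * q s * a s) / (p s + a s) ^ 3) * (h s) ^ 2 := by
    intro h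
    rw [iteratedFDeriv_two_apply, hsnd]
    show (M (![h,h] 0)) (![h,h] 1) = _
    have hpa : ∀ (s : Fin S) (z : EuclideanSpace ℝ (Fin S)),
        (EuclideanSpace.proj (𝕜 := ℝ) s) z = z s := fun _ _ => rfl
    simp only [Matrix.cons_val_zero, Matrix.cons_val_one, Matrix.head_cons, hM_def,
      ContinuousLinearMap.sum_apply, ContinuousLinearMap.smulRight_apply,
      ContinuousLinearMap.smul_apply, hpa, smul_eq_mul]
    exact Finset.sum_congr rfl fun s _ => by ring
  have hden : ∀ s, p s + a s = d s + ∑ j, x j s := by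
    intro s
    rw [show p s = x i₀ s from rfl, ← hsum (x i₀ s) s]
    congr 1
    exact Finset.sum_congr rfl fun j _ => by split <;> simp_all
  constructor
  · intro h
    rw [key h]
    exact Finset.sum_congr rfl fun s _ => by rw [hden s, ha_def]
  · intro h
    rw [key h]
    set m : ℝ := Finset.univ.inf' (Finset.univ_nonempty_iff.mpr ⟨⟨0, hS⟩⟩)
      (fun s => q s * d s) with hm_def
    set D : ℝ := (∑ s, d s) + ∑ j, B j with hD_def
    have hm_pos : 0 < m := by
      rw [hm_def, Finset.lt_inf'_iff]
      exact fun s _ => mul_pos (hq s) (hd s)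
    have hm_le : ∀ s, m ≤ q s * a s := by
      intro s
      calc m ≤ q s * d s := Finset.inf'_le _ (Finset.mem_univ s)
        _ ≤ q s * a s := by
            apply mul_le_mul_of_nonneg_left _ (hq s).le
            exact le_add_of_nonneg_right (Finset.sum_nonneg fun j _ => hx_nonneg j s)
    have hD_le : ∀ s, p s + a s ≤ D := by
      intro s
      rw [hden s, hD_def]
      apply add_le_add
      · exact Finset.single_le_sum (fun t _ => (hd t).le) (Finset.mem_univ s)
      · apply Finset.sum_le_sum
        intro j _
        calc x j s ≤ ∑ t, x j t :=
              Finset.single_le_sum (fun t _ => hx_nonneg j t) (Finset.mem_univ s)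
          _ ≤ B j := hx_budget j
    have hnorm : ‖h‖ ^ 2 = ∑ s, (h s) ^ 2 := by
      rw [EuclideanSpace.norm_eq, Real.sq_sqrt (Finset.sum_nonneg fun s _ => by positivity)]
      exact Finset.sum_congr rfl fun s _ => by rw [Real.norm_eq_abs, sq_abs]
    rw [hnorm, Finset.mul_sum]
    apply Finset.sum_le_sum
    intro s _
    have h1 : 0 < p s + a s := hp_pos s
    have h2 : m / D ^ 3 ≤ q s * a s / (p s + a s) ^ 3 := by
      apply div_le_div₀ (mul_nonneg (hq s).le (ha_pos s).le) (hm_le s) (by positivity)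
      exact pow_le_pow_left₀ h1.le (hD_le s) 3
    have h3 : 2 * g * (m / D ^ 3) * (h s) ^ 2
        ≤ 2 * g * (q s * a s / (p s + a s) ^ 3) * (h s) ^ 2 :=
      mul_le_mul_of_nonneg_right
        (mul_le_mul_of_nonneg_left h2 (by linarith : (0:ℝ) ≤ 2 * g)) (sq_nonneg (h s))
    have e1 : -(2 * g * q s * a s) / (p s + a s) ^ 3 * (h s) ^ 2
        = -(2 * g * (q s * a s / (p s + a s) ^ 3) * (h s) ^ 2) := by ring
    have e2 : -(2 * g * m / D ^ 3) * (h s) ^ 2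
        = -(2 * g * (m / D ^ 3) * (h s) ^ 2) := by ring
    rw [e1, e2]
    exact neg_le_neg h3
end
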